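/- arXiv:2209.01863 — 2 statements merged into one kernel-verified Lean document; each statement's English description precedes it below -/
import Mathlib

section
/- Fix an input I for the (b,a)-matching problem. For each pair e∈V² let k_e = ⌈α/ℓ_e⌉ and, for each e independently, call every k_e-th request to e in I special; let I₁ be the subsequence of special requests of I, interpreted as an input to the uniform variant (all distances 1, reconfiguration cost 1). Let ALG₁ be any algorithm for the uniform (b,a)-matching problem run on I₁, and let ALG be the algorithm for I that replays exactly the matching reconfigurations that ALG₁ performs on I₁ (so ALG changes the matching only at special requests). Then ALG(I) ≤ 2γα·ALG₁(I₁) + |V²|·γα, where γ = 1 + ℓ_max/α and ℓ_max = max_{e∈V²} ℓ_e. -/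
open scoped ENNReal symmDiff

namespace BM

/-! ### The (dynamic, online) `(b,a)`-matching problem -/

variable {V : Type*} [Fintype V] [DecidableEq V]

/-- A matching state: a finite set of unordered node pairs. -/
abbrev State (V : Type*) := Finset (Sym2 V)

/-- Every pair in `M` is non-diagonal, and every node is incident
to at most `b` pairs of `M` (a `b`-matching). -/
def DegLE (b : ℕ) (M : State V) : Prop :=
  (∀ e ∈ M, ¬ e.IsDiag) ∧ ∀ v : V, (M.filter (fun e => v ∈ e)).card ≤ b

/-- A schedule: `M i` is the matching with which the `i`-th request (0-based)
is served; right after serving it, the matching is changed to `M (i+1)`. -/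
abbrev Schedule (V : Type*) := ℕ → State V

/-- A feasible schedule for degree bound `b`: it starts with the empty matching
and always satisfies the degree constraint. -/
def Feasible (b : ℕ) (M : Schedule V) : Prop :=
  M 0 = ∅ ∧ ∀ i, DegLE b (M i)

/-- Total cost of schedule `M` on the request sequence `I`, with pair distances `ℓ`
and reconfiguration cost `α`: serving a request `e` costs `1` if `e` is a matching
edge and `ℓ e` otherwise, and afterwards every pair added to or removed from the
matching costs `α`. -/
noncomputable def cost (ℓ : Sym2 V → ℝ≥0∞) (α : ℝ≥0∞) :
    List (Sym2 V) → Schedule V → ℝ≥0∞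
  | [], _ => 0
  | e :: I, M =>
      (if e ∈ M 0 then 1 else ℓ e) + α * ((M 0 ∆ M 1).card : ℝ≥0∞)
        + cost ℓ α I (fun i => M (i + 1))

/-- Optimal (offline) cost with degree bound `a`. -/
noncomputable def OPT (ℓ : Sym2 V → ℝ≥0∞) (α : ℝ≥0∞) (a : ℕ) (I : List (Sym2 V)) : ℝ≥0∞ :=
  ⨅ (M : Schedule V) (_ : Feasible a M), cost ℓ α I M

/-- A deterministic online algorithm: for every history (the list of requests
served so far) it outputs the current matching. -/
abbrev DetAlg (V : Type*) := List (Sym2 V) → State V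

/-- The schedule produced by online algorithm `A` on input `I`. -/
def run (A : DetAlg V) (I : List (Sym2 V)) : Schedule V := fun i => A (I.take i)

/-- An online algorithm is feasible for degree bound `b` if it starts with the
empty matching and always satisfies the degree constraint. -/
def AlgOK (b : ℕ) (A : DetAlg V) : Prop :=
  A [] = ∅ ∧ ∀ h, DegLE b (A h)

/-- There is a deterministic `ρ`-competitive online algorithm for the
`(b,a)`-matching problem with distances `ℓ` and reconfiguration cost `α`
(the additive constant `β` must be independent of the request sequence). -/
def DetCompetitive (ℓ : Sym2 V → ℝ≥0∞) (α : ℝ≥0∞) (b a : ℕ) (ρ : ℝ≥0∞) : Prop :=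
  ∃ A : DetAlg V, AlgOK b A ∧ ∃ β : ℝ≥0∞, β ≠ ∞ ∧
    ∀ I : List (Sym2 V), (∀ e ∈ I, ¬ e.IsDiag) →
      cost ℓ α I (run A I) ≤ ρ * OPT ℓ α a I + β

/-- Expected cost of a randomized online algorithm, modeled as a probability
distribution over deterministic online algorithms (oblivious adversary). -/
noncomputable def ExpCost (ℓ : Sym2 V → ℝ≥0∞) (α : ℝ≥0∞) (p : PMF (DetAlg V))
    (I : List (Sym2 V)) : ℝ≥0∞ :=
  ∑' A : DetAlg V, p A * cost ℓ α I (run A I)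

/-- There is a randomized `ρ`-competitive online algorithm for the
`(b,a)`-matching problem. -/
def RandCompetitive (ℓ : Sym2 V → ℝ≥0∞) (α : ℝ≥0∞) (b a : ℕ) (ρ : ℝ≥0∞) : Prop :=
  ∃ p : PMF (DetAlg V), (∀ A ∈ p.support, AlgOK b A) ∧ ∃ β : ℝ≥0∞, β ≠ ∞ ∧
    ∀ I : List (Sym2 V), (∀ e ∈ I, ¬ e.IsDiag) →
      ExpCost ℓ α p I ≤ ρ * OPT ℓ α a I + β

/-- Shortest-path distance of an unordered pair of nodes in the graph `G`. -/
noncomputable def gdist (G : SimpleGraph V) : Sym2 V → ℝ≥0∞ :=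
  Sym2.lift ⟨fun u v => (G.dist u v : ℝ≥0∞), fun u v => by simp [SimpleGraph.dist_comm]⟩

/-- `ℓ_max`, the largest pair distance. -/
noncomputable def lmax (ℓ : Sym2 V → ℝ≥0∞) : ℝ≥0∞ := Finset.univ.sup ℓ

/-- `γ = 1 + ℓ_max / α`. -/
noncomputable def gamma (ℓ : Sym2 V → ℝ≥0∞) (α : ℝ≥0∞) : ℝ≥0∞ := 1 + lmax ℓ / α

/-- The number of unordered pairs of distinct nodes, `|V²|`. -/
def nPairs (V : Type*) [Fintype V] [DecidableEq V] : ℕ :=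
  (Finset.univ.filter (fun e : Sym2 V => ¬ e.IsDiag)).card

/-! ### Reduction to the uniform case: special requests -/

/-- `k_e = ⌈α / ℓ_e⌉`. -/
noncomputable def kval (ℓ : Sym2 V → ℝ≥0∞) (α : ℝ≥0∞) (e : Sym2 V) : ℕ :=
  ⌈(α / ℓ e).toReal⌉₊

/-- The positions of the special requests of `I`: for every pair `e`
independently, every `k e`-th request to `e` in `I` is special. -/
def specialIdx (k : Sym2 V → ℕ) (I : List (Sym2 V)) : List ℕ :=
  (List.range I.length).filter (fun i =>
    match I[i]? with
    | some e => decide (k e ∣ (I.take (i + 1)).count e)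
    | none => false)

/-- The subsequence of special requests of `I` (the uniform instance `I₁`). -/
def specialSub (k : Sym2 V → ℕ) (I : List (Sym2 V)) : List (Sym2 V) :=
  (specialIdx k I).filterMap (fun i => I[i]?)

/-! ### Paging (forced fetching) -/

section Paging

variable {P : Type*} [DecidableEq P]

/-- A cache schedule starting from the empty cache, with cache size at most `b`:
`C i` is the cache content when the `i`-th request (0-based) arrives; right after
serving it, the cache is changed to `C (i+1)`. -/
def CacheLE (b : ℕ) (C : ℕ → Finset P) : Prop :=
  C 0 = ∅ ∧ ∀ i, (C i).card ≤ b

/-- Forced fetching: every requested page is in the cache immediately after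
its request is served.  (For matching schedules, this is the *forcing
property*: the requested pair is in the matching right after being served.) -/
def Served : List P → (ℕ → Finset P) → Prop
  | [], _ => True
  | e :: I, C => e ∈ C 1 ∧ Served I (fun i => C (i + 1))

/-- Total fetch cost of a cache schedule: `1` per page brought into the cache
(evictions are free). -/
noncomputable def fetchCost : List P → (ℕ → Finset P) → ℝ≥0∞
  | [], _ => 0
  | _ :: I, C => ((C 1 \ C 0).card : ℝ≥0∞) + fetchCost I (fun i => C (i + 1))

/-- Optimal offline cost of paging (forced fetching) with cache size `a`. -/
noncomputable def pOPT (a : ℕ) (I : List P) : ℝ≥0∞ :=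
  ⨅ (C : ℕ → Finset P) (_ : CacheLE a C ∧ Served I C), fetchCost I C

/-- An online paging algorithm: for every history it outputs the cache content. -/
abbrev PagingAlg (P : Type*) := List P → Finset P

/-- The cache schedule produced by online paging algorithm `B` on input `I`. -/
def prun (B : PagingAlg P) (I : List P) : ℕ → Finset P := fun i => B (I.take i)

/-- An online paging algorithm for cache size `b` with forced fetching: it starts
with the empty cache, respects the cache size, and always fetches the requested page. -/
def PagingAlgOK (b : ℕ) (B : PagingAlg P) : Prop :=
  B [] = ∅ ∧ (∀ h, (B h).card ≤ b) ∧ ∀ h e, e ∈ B (h ++ [e])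

/-- There is a deterministic `ρ`-competitive online algorithm for the
`(b,a)`-paging problem (forced fetching). -/
def PDetCompetitive (P : Type*) [DecidableEq P] (b a : ℕ) (ρ : ℝ≥0∞) : Prop :=
  ∃ B : PagingAlg P, PagingAlgOK b B ∧ ∃ β : ℝ≥0∞, β ≠ ∞ ∧
    ∀ I : List P, fetchCost I (prun B I) ≤ ρ * pOPT a I + β

/-- Expected fetch cost of a randomized paging algorithm, modeled as a
probability distribution over deterministic paging algorithms. -/
noncomputable def pExpCost (p : PMF (PagingAlg P)) (I : List P) : ℝ≥0∞ :=
  ∑' B : PagingAlg P, p B * fetchCost I (prun B I)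

/-- There is a randomized `ρ`-competitive online algorithm for the
`(b,a)`-paging problem (forced fetching). -/
def PRandCompetitive (P : Type*) [DecidableEq P] (b a : ℕ) (ρ : ℝ≥0∞) : Prop :=
  ∃ p : PMF (PagingAlg P), (∀ B ∈ p.support, PagingAlgOK b B) ∧ ∃ β : ℝ≥0∞, β ≠ ∞ ∧
    ∀ I : List P, pExpCost p I ≤ ρ * pOPT a I + β

/-! ### Paging with bypassing -/

/-- Cost of a cache schedule in paging *with bypassing*: a request to a cached
page is free, a request to an uncached page costs `1`, and every page brought
into the cache costs `1` (evictions are free). -/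
noncomputable def bpCost : List P → (ℕ → Finset P) → ℝ≥0∞
  | [], _ => 0
  | e :: I, C =>
      (if e ∈ C 0 then 0 else 1) + ((C 1 \ C 0).card : ℝ≥0∞)
        + bpCost I (fun i => C (i + 1))

/-- Optimal offline cost of paging with bypassing, cache size `a`. -/
noncomputable def bpOPT (a : ℕ) (I : List P) : ℝ≥0∞ :=
  ⨅ (C : ℕ → Finset P) (_ : CacheLE a C), bpCost I C

/-- There is a deterministic `ρ`-competitive online algorithm for
`(b,a)`-paging with bypassing. -/
def BPDetCompetitive (P : Type*) [DecidableEq P] (b a : ℕ) (ρ : ℝ≥0∞) : Prop :=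
  ∃ B : PagingAlg P, (B [] = ∅ ∧ ∀ h, (B h).card ≤ b) ∧ ∃ β : ℝ≥0∞, β ≠ ∞ ∧
    ∀ I : List P, bpCost I (prun B I) ≤ ρ * bpOPT a I + β

/-- Expected cost of a randomized algorithm for paging with bypassing. -/
noncomputable def bpExpCost (p : PMF (PagingAlg P)) (I : List P) : ℝ≥0∞ :=
  ∑' B : PagingAlg P, p B * bpCost I (prun B I)

/-- There is a randomized `ρ`-competitive online algorithm for
`(b,a)`-paging with bypassing. -/
def BPRandCompetitive (P : Type*) [DecidableEq P] (b a : ℕ) (ρ : ℝ≥0∞) : Prop :=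
  ∃ p : PMF (PagingAlg P), (∀ B ∈ p.support, B [] = ∅ ∧ ∀ h, (B h).card ≤ b) ∧
    ∃ β : ℝ≥0∞, β ≠ ∞ ∧ ∀ I : List P, bpExpCost p I ≤ ρ * bpOPT a I + β

end Paging

/-! ### Constructions used in the reductions -/

/-- The subsequence `I_v` of requests of `I` having `v` as an endpoint. -/
def subInput (I : List (Sym2 V)) (v : V) : List (Sym2 V) :=
  I.filter (fun e => decide (v ∈ e))

/-- The matching schedule combining per-node paging algorithms `A v`: a pair is
a matching edge iff it lies in the caches of both of its endpoints. -/
def combSchedule (A : V → PagingAlg (Sym2 V)) (I : List (Sym2 V)) : Schedule V :=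
  fun i => Finset.univ.filter
    (fun e : Sym2 V => ¬ e.IsDiag ∧
      ∀ v : V, v ∈ e → e ∈ A v ((I.take i).filter (fun q => decide (v ∈ q))))

/-- The positions in `I` of the requests having `v` as an endpoint. -/
def idxs (I : List (Sym2 V)) (v : V) : List ℕ :=
  (List.range I.length).filter (fun i =>
    match I[i]? with
    | some e => decide (v ∈ e)
    | none => false)

/-- The cache schedule at node `v` induced by a matching schedule `M`
(repeating the actions of `M` pertaining to pairs with endpoint `v`):
after the `t`-th request of `I_v` the cache holds exactly the matching
edges incident to `v`. -/
def inducedCache (I : List (Sym2 V)) (M : Schedule V) (v : V) : ℕ → Finset (Sym2 V)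
  | 0 => ∅
  | t + 1 => (M ((idxs I v).getD t I.length + 1)).filter (fun e => v ∈ e)

/-- The star graph on `Fin (n+1)`, with center `0` joined to every other node. -/
def starGraph (n : ℕ) : SimpleGraph (Fin (n + 1)) :=
  SimpleGraph.fromRel (fun u _ => u = 0)

/-- Replacing each paging request `i` by a block of `α` consecutive matching
requests to the pair `{v₀, v_i}` of the star graph. -/
def blocks (n α : ℕ) (J : List (Fin n)) : List (Sym2 (Fin (n + 1))) :=
  (J.map (fun i => List.replicate α s((0 : Fin (n + 1)), i.succ))).flatten
end BM

/-!
Between two special requests the replayed schedule is constant, so its reconfigurations are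
exactly those of `M₁` on `I₁`, each paid `α` instead of `1`. Every request is served at cost at
most `ℓ_e`, and the `n_e` requests to a pair `e` split into `⌊n_e / k_e⌋` special ones plus
fewer than `k_e` others; since `k_e ℓ_e ≤ α + ℓ_e ≤ γα`, the serving cost of each pair is at
most `γα` per special request to it plus one extra `γα`. Altogether
`ALG(I) ≤ γα (|I₁| + moves of M₁) + |V²| γα = γα ALG₁(I₁) + |V²| γα`.
-/

open Finset

namespace BM

theorem sum_range_comp_of_step {M : Type*} [AddCommMonoid M] (f : ℕ → ℕ → M)
    (hf : ∀ t, f t t = 0) (c : ℕ → ℕ) (h0 : c 0 = 0)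
    (hstep : ∀ i, c (i + 1) = c i ∨ c (i + 1) = c i + 1) (n : ℕ) :
    ∑ i ∈ range n, f (c i) (c (i + 1)) = ∑ t ∈ range (c n), f t (t + 1) := by
  induction n with
  | zero => simp [h0]
  | succ n ih =>
    rw [sum_range_succ, ih]
    rcases hstep n with h | h <;> rw [h]
    · rw [hf, add_zero]
    · rw [sum_range_succ]

theorem countP_lt_succ (l : List ℕ) (i : ℕ) :
    l.countP (· < i + 1) = l.countP (· < i) + l.count i := by
  induction l with
  | nil => rfl
  | cons a l ih =>
    simp only [List.countP_cons, List.count_cons, ih, decide_eq_true_eq, beq_iff_eq]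
    split_ifs <;> omega

variable {V : Type*}

section Schedules

variable [DecidableEq V]

noncomputable def changes (M : Schedule V) (n : ℕ) : ℝ≥0∞ :=
  ∑ i ∈ range n, ((M i ∆ M (i + 1)).card : ℝ≥0∞)

theorem changes_succ' (M : Schedule V) (n : ℕ) :
    changes M (n + 1) = ((M 0 ∆ M 1).card : ℝ≥0∞) + changes (fun i => M (i + 1)) n := by
  rw [changes, sum_range_succ', add_comm]
  rfl

theorem cost_uniform (I : List (Sym2 V)) (M : Schedule V) :
    cost (fun _ => 1) 1 I M = I.length + changes M I.length := by
  induction I generalizing M with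
  | nil => simp [cost, changes]
  | cons e I ih =>
    rw [cost, ih, List.length_cons, changes_succ', ite_self, one_mul]
    push_cast
    ring

theorem cost_le_sum_add_changes (ℓ : Sym2 V → ℝ≥0∞) (α : ℝ≥0∞) (I : List (Sym2 V))
    (M : Schedule V) (hℓ : ∀ e ∈ I, 1 ≤ ℓ e) :
    cost ℓ α I M ≤ (I.map ℓ).sum + α * changes M I.length := by
  induction I generalizing M with
  | nil => simp [cost]
  | cons e I ih =>
    have hserve : (if e ∈ M 0 then 1 else ℓ e) ≤ ℓ e := by
      split_ifs
      exacts [hℓ e List.mem_cons_self, le_rfl]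
    have hrest := ih (fun i => M (i + 1)) fun e' he' => hℓ e' (List.mem_cons_of_mem e he')
    calc cost ℓ α (e :: I) M
        ≤ ℓ e + α * ((M 0 ∆ M 1).card : ℝ≥0∞)
            + ((I.map ℓ).sum + α * changes (fun i => M (i + 1)) I.length) := by
          rw [cost]; gcongr
      _ = ((e :: I).map ℓ).sum + α * changes M (e :: I).length := by
          rw [List.map_cons, List.sum_cons, List.length_cons, changes_succ']
          ring

theorem changes_countP_lt (M : Schedule V) (S : List ℕ) (hS : S.Nodup) (n : ℕ) :
    changes (fun i => M (S.countP (· < i))) n = changes M (S.countP (· < n)) :=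
  sum_range_comp_of_step (fun s t => ((M s ∆ M t).card : ℝ≥0∞)) (by simp)
    (fun i => S.countP (· < i)) (List.countP_eq_zero.mpr (by simp))
    (fun i => by
      rw [countP_lt_succ]
      rcases Nat.le_one_iff_eq_zero_or_eq_one.mp (List.nodup_iff_count_le_one.mp hS i) with h | h
      · exact Or.inl (by rw [h, add_zero])
      · exact Or.inr (by rw [h]))
    n

theorem cost_replay_le (ℓ : Sym2 V → ℝ≥0∞) (α : ℝ≥0∞) (I : List (Sym2 V)) (M : Schedule V)
    (hℓ : ∀ e ∈ I, 1 ≤ ℓ e) (S : List ℕ) (hS : S.Nodup) (hSI : ∀ i ∈ S, i < I.length) :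
    cost ℓ α I (fun i => M (S.countP (· < i))) ≤ (I.map ℓ).sum + α * changes M S.length := by
  have hcount : S.countP (· < I.length) = S.length :=
    List.countP_eq_length.mpr fun i hi => decide_eq_true (hSI i hi)
  calc cost ℓ α I (fun i => M (S.countP (· < i)))
      ≤ (I.map ℓ).sum + α * changes (fun i => M (S.countP (· < i))) I.length :=
        cost_le_sum_add_changes ℓ α I _ hℓ
    _ = (I.map ℓ).sum + α * changes M S.length := by rw [changes_countP_lt M S hS, hcount]

theorem specialIdx_nodup (k : Sym2 V → ℕ) (I : List (Sym2 V)) : (specialIdx k I).Nodup :=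
  List.nodup_range.filter _

theorem lt_length_of_mem_specialIdx {k : Sym2 V → ℕ} {I : List (Sym2 V)} {i : ℕ}
    (hi : i ∈ specialIdx k I) : i < I.length :=
  List.mem_range.mp (List.mem_filter.mp hi).1

theorem length_specialSub (k : Sym2 V → ℕ) (I : List (Sym2 V)) :
    (specialSub k I).length = (specialIdx k I).length := by
  rw [specialSub, List.length_filterMap_eq_countP, List.countP_eq_length]
  intro i hi
  simp [lt_length_of_mem_specialIdx hi]

theorem length_specialIdx_append_singleton (k : Sym2 V → ℕ) (J : List (Sym2 V)) (e : Sym2 V) :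
    (specialIdx k (J ++ [e])).length
      = (specialIdx k J).length + if k e ∣ J.count e + 1 then 1 else 0 := by
  rw [specialIdx, List.length_append, List.length_singleton, List.range_succ, List.filter_append,
    List.length_append, specialIdx]
  congr 1
  · congr 1
    refine List.filter_congr fun i hi => ?_
    have hi : i < J.length := List.mem_range.mp hi
    rw [List.getElem?_append_left hi, List.take_append_of_le_length hi]
  · have htake : (J ++ [e]).take (J.length + 1) = J ++ [e] := List.take_of_length_le (by simp)
    by_cases h : k e ∣ J.count e + 1 <;> simp [htake, h]

theorem length_specialIdx [Fintype V] (k : Sym2 V → ℕ) (I : List (Sym2 V)) :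
    (specialIdx k I).length = ∑ e, I.count e / k e := by
  induction I using List.reverseRecOn with
  | nil => simp [specialIdx]
  | append_singleton J e ih =>
    have hcount (e' : Sym2 V) : (J ++ [e]).count e' / k e'
        = J.count e' / k e' + if e' = e then (if k e ∣ J.count e + 1 then 1 else 0) else 0 := by
      by_cases h : e' = e
      · subst h; simp [Nat.succ_div]
      · simp [Ne.symm h, h]
    simp only [length_specialIdx_append_singleton, ih, hcount, sum_add_distrib, sum_ite_eq',
      mem_univ, if_true]

end Schedules

section Distances

variable {ℓ : Sym2 V → ℝ≥0∞} {α : ℝ≥0∞} {e : Sym2 V}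

theorem one_le_kval (hα0 : α ≠ 0) (hα : α ≠ ∞) (hℓ0 : ℓ e ≠ 0) (hℓ : ℓ e ≠ ∞) :
    1 ≤ kval ℓ α e :=
  Nat.one_le_ceil_iff.mpr <| ENNReal.toReal_pos (ENNReal.div_pos hα0 hℓ).ne'
    (ENNReal.div_ne_top hα hℓ0)

theorem mul_kval_le (hα : α ≠ ∞) (hℓ0 : ℓ e ≠ 0) (hℓ : ℓ e ≠ ∞) :
    ℓ e * kval ℓ α e ≤ α + ℓ e := by
  have hfin : α / ℓ e ≠ ∞ := ENNReal.div_ne_top hα hℓ0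
  have hceil : (kval ℓ α e : ℝ≥0∞) ≤ α / ℓ e + 1 := by
    have h := ENNReal.ofReal_le_ofReal
      (Nat.ceil_lt_add_one (ENNReal.toReal_nonneg (a := α / ℓ e))).le
    rwa [ENNReal.ofReal_natCast, ENNReal.ofReal_add ENNReal.toReal_nonneg zero_le_one,
      ENNReal.ofReal_toReal hfin, ENNReal.ofReal_one] at h
  calc ℓ e * kval ℓ α e ≤ ℓ e * (α / ℓ e + 1) := by gcongr
    _ = α + ℓ e := by rw [mul_add, ENNReal.mul_div_cancel hℓ0 hℓ, mul_one]

theorem natCast_mul_le_of_kval (hα0 : α ≠ 0) (hα : α ≠ ∞) (hℓ0 : ℓ e ≠ 0) (hℓ : ℓ e ≠ ∞)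
    (n : ℕ) : n * ℓ e ≤ (α + ℓ e) * (n / kval ℓ α e + 1 : ℕ) := by
  have hn : n ≤ kval ℓ α e * (n / kval ℓ α e + 1) :=
    (Nat.lt_mul_div_succ n (one_le_kval hα0 hα hℓ0 hℓ)).le
  calc (n : ℝ≥0∞) * ℓ e ≤ (kval ℓ α e * (n / kval ℓ α e + 1) : ℕ) * ℓ e := by gcongr
    _ = ℓ e * kval ℓ α e * (n / kval ℓ α e + 1 : ℕ) := by push_cast; ring
    _ ≤ (α + ℓ e) * (n / kval ℓ α e + 1 : ℕ) := by gcongr; exact mul_kval_le hα hℓ0 hℓ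

theorem one_le_gdist {G : SimpleGraph V} (hG : G.Connected) (he : ¬ e.IsDiag) :
    1 ≤ gdist G e := by
  induction e using Sym2.ind with
  | _ u v =>
    show (1 : ℝ≥0∞) ≤ G.dist u v
    exact_mod_cast hG.pos_dist_of_ne (by simpa using he)

theorem gdist_ne_top (G : SimpleGraph V) (e : Sym2 V) : gdist G e ≠ ∞ := by
  induction e using Sym2.ind with
  | _ u v => exact ENNReal.natCast_ne_top _

variable [Fintype V]

theorem gamma_mul_self (hα0 : α ≠ 0) (hα : α ≠ ∞) : gamma ℓ α * α = α + lmax ℓ := by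
  rw [gamma, add_mul, one_mul, ENNReal.div_mul_cancel hα0 hα]

end Distances

theorem card_toFinset_le_nPairs [Fintype V] [DecidableEq V] {I : List (Sym2 V)}
    (hI : ∀ e ∈ I, ¬ e.IsDiag) : I.toFinset.card ≤ nPairs V :=
  card_le_card fun e he => mem_filter.mpr ⟨mem_univ e, hI e (List.mem_toFinset.mp he)⟩

theorem sum_map_le_gamma_mul [Fintype V] [DecidableEq V] {ℓ : Sym2 V → ℝ≥0∞} {α : ℝ≥0∞}
    (hα0 : α ≠ 0) (hα : α ≠ ∞) (I : List (Sym2 V))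
    (hℓ : ∀ e ∈ I, ℓ e ≠ 0 ∧ ℓ e ≠ ∞) :
    (I.map ℓ).sum ≤ gamma ℓ α * α * ((specialIdx (kval ℓ α) I).length + I.toFinset.card) := by
  set k := kval ℓ α
  have hspecial : ∑ e ∈ I.toFinset, I.count e / k e ≤ (specialIdx k I).length := by
    rw [length_specialIdx]
    exact sum_le_sum_of_subset (subset_univ _)
  calc (I.map ℓ).sum = ∑ e ∈ I.toFinset, (I.count e : ℝ≥0∞) * ℓ e := by
        simp only [sum_list_map_count, nsmul_eq_mul]
    _ ≤ ∑ e ∈ I.toFinset, gamma ℓ α * α * (I.count e / k e + 1 : ℕ) := by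
        refine sum_le_sum fun e he => ?_
        obtain ⟨hℓ0, hℓtop⟩ := hℓ e (List.mem_toFinset.mp he)
        calc (I.count e : ℝ≥0∞) * ℓ e ≤ (α + ℓ e) * (I.count e / k e + 1 : ℕ) :=
              natCast_mul_le_of_kval hα0 hα hℓ0 hℓtop _
          _ ≤ gamma ℓ α * α * (I.count e / k e + 1 : ℕ) := by
              rw [gamma_mul_self hα0 hα]; gcongr; exact le_sup (mem_univ e)
    _ = gamma ℓ α * α * (∑ e ∈ I.toFinset, I.count e / k e + I.toFinset.card : ℕ) := by
        rw [← mul_sum]; push_cast [sum_add_distrib, card_eq_sum_ones]; rfl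
    _ ≤ gamma ℓ α * α * ((specialIdx k I).length + I.toFinset.card) := by
        gcongr; exact_mod_cast Nat.add_le_add_right hspecial _

theorem statement1_general (V : Type) [Fintype V] [DecidableEq V]
    (G : SimpleGraph V) (hG : G.Connected)
    (α : ℝ≥0∞) (hα1 : 1 ≤ α) (hαtop : α ≠ ∞)
    (I : List (Sym2 V)) (hI : ∀ e ∈ I, ¬ e.IsDiag)
    (M₁ : Schedule V) :
    cost (gdist G) α I
        (fun i => M₁ ((specialIdx (kval (gdist G) α) I).countP (fun j => decide (j < i))))
      ≤ 2 * gamma (gdist G) α * α *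
          cost (fun _ : Sym2 V => 1) 1 (specialSub (kval (gdist G) α) I) M₁
        + (nPairs V : ℝ≥0∞) * gamma (gdist G) α * α := by
  set ℓ := gdist G
  set S := specialIdx (kval ℓ α) I
  set γα := gamma ℓ α * α with hγα
  have hα0 : α ≠ 0 := (zero_lt_one.trans_le hα1).ne'
  have hℓ1 (e) (he : e ∈ I) : 1 ≤ ℓ e := one_le_gdist hG (hI e he)
  have hserve : (I.map ℓ).sum ≤ γα * (S.length + nPairs V) :=
    (sum_map_le_gamma_mul hα0 hαtop I fun e he =>
      ⟨(zero_lt_one.trans_le (hℓ1 e he)).ne', gdist_ne_top G e⟩).trans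
      (by gcongr; exact_mod_cast card_toFinset_le_nPairs hI)
  have hαγ : α ≤ γα := by rw [hγα, gamma_mul_self hα0 hαtop]; exact le_self_add
  calc cost ℓ α I (fun i => M₁ (S.countP (· < i)))
      ≤ (I.map ℓ).sum + α * changes M₁ S.length :=
        cost_replay_le ℓ α I M₁ hℓ1 S (specialIdx_nodup _ I) fun i => lt_length_of_mem_specialIdx
    _ ≤ γα * (S.length + nPairs V) + γα * changes M₁ S.length := by gcongr
    _ = γα * cost (fun _ => 1) 1 (specialSub (kval ℓ α) I) M₁ + nPairs V * γα := by
        rw [cost_uniform, length_specialSub]; ring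
    _ ≤ 2 * gamma ℓ α * α * cost (fun _ => 1) 1 (specialSub (kval ℓ α) I) M₁
          + nPairs V * gamma ℓ α * α := by
        rw [mul_assoc 2, two_mul, mul_assoc (nPairs V : ℝ≥0∞)]
        gcongr
        exact le_add_right le_rfl

/-- Let `I₁` be the subsequence of special requests of `I`
(every `k_e = ⌈α/ℓ_e⌉`-th request to each pair `e`), viewed as a uniform instance,
and let `ALG₁` be any algorithm producing schedule `M₁` on `I₁`.  The algorithm
`ALG` that replays the reconfigurations of `M₁` (changing the matching only at
special requests) satisfies `ALG(I) ≤ 2γα·ALG₁(I₁) + |V²|·γα`. -/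
theorem statement1 (V : Type) [Fintype V] [DecidableEq V]
    (G : SimpleGraph V) (hG : G.Connected)
    (α : ℝ≥0∞) (hα1 : 1 ≤ α) (hαtop : α ≠ ∞)
    (b a : ℕ) (hab : a ≤ b)
    (I : List (Sym2 V)) (hI : ∀ e ∈ I, ¬ e.IsDiag)
    (M₁ : Schedule V) (hM₁ : Feasible b M₁) :
    cost (gdist G) α I
        (fun i => M₁ ((specialIdx (kval (gdist G) α) I).countP (fun j => decide (j < i))))
      ≤ 2 * gamma (gdist G) α * α *
          cost (fun _ : Sym2 V => 1) 1 (specialSub (kval (gdist G) α) I) M₁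
        + (nPairs V : ℝ≥0∞) * gamma (gdist G) α * α :=
  statement1_general V G hG α hα1 hαtop I hI M₁
end BM
end

section
/- Let OFF be a feasible offline solution for an input I of the uniform a-matching problem satisfying the forcing property (immediately after each request is served, the requested pair is in the matching). For each node v, let OFF_v be the induced cache schedule on the subsequence I_v of requests having v as an endpoint, obtained by repeating all of OFF's matching actions pertaining to pairs with endpoint v. Then each OFF_v is a feasible solution to the a-paging problem with forced fetching on I_v, and ∑_{v∈V} OFF_v(I_v) ≤ 2·OFF(I), where OFF_v(I_v) counts only fetch costs. -/
open scoped ENNReal symmDiff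

/-! The cache of `v` just after its `t`-th request is the trace at `v` of the matching just
after that request. So whenever `OFF_v` fetches a pair, `OFF` has added that pair, with endpoint
`v`, to the matching since `v`'s previous request. A single addition is paid for at most
once at each of its two endpoints, which gives the factor `2`. The forcing property of `OFF`
is forced fetching for every `OFF_v`, and the degree bound of the matching is the cache size
bound. -/

namespace BM

open Finset

section Paging

variable {P : Type*}

theorem served_of_succ_eq {J : List P} {C C' : ℕ → Finset P}
    (h : ∀ i, C (i + 1) = C' (i + 1)) (hC' : Served J C') : Served J C := by
  induction J generalizing C C' with
  | nil => trivial
  | cons e J ih => exact ⟨h 0 ▸ hC'.1, ih (fun i => h (i + 1)) hC'.2⟩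

theorem fetchCost_le_of_succ_eq [DecidableEq P] (J : List P) {C C' : ℕ → Finset P}
    (h : ∀ i, C (i + 1) = C' (i + 1)) :
    fetchCost J C ≤ fetchCost J C' + #(C' 0 \ C 0) := by
  cases J with
  | nil => simp [fetchCost]
  | cons e J =>
    have htail : (fun i => C (i + 1)) = fun i => C' (i + 1) := funext h
    have hcard : #(C' 1 \ C 0) ≤ #(C' 1 \ C' 0) + #(C' 0 \ C 0) :=
      (card_le_card (sdiff_triangle _ _ _)).trans (card_union_le _ _)
    simp only [fetchCost, htail, h 0]
    calc (#(C' 1 \ C 0) : ℝ≥0∞) + fetchCost J (fun i => C' (i + 1))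
        ≤ (#(C' 1 \ C' 0) + #(C' 0 \ C 0) : ℕ) + fetchCost J (fun i => C' (i + 1)) := by
          gcongr
      _ = _ := by push_cast; ring

end Paging

variable {V : Type*} [DecidableEq V]

theorem sum_card_filter_mem_le [Fintype V] (A : Finset (Sym2 V)) :
    ∑ v : V, #(A.filter (v ∈ ·)) ≤ 2 * #A := by
  calc ∑ v : V, #(A.filter (v ∈ ·))
      = ∑ e ∈ A, #(univ.filter (· ∈ e)) :=
        sum_card_bipartiteAbove_eq_sum_card_bipartiteBelow (fun v e => v ∈ e)
    _ = ∑ e ∈ A, #e.toFinset := by congr! with e; ext; simp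
    _ ≤ ∑ _e ∈ A, 2 := sum_le_sum fun e _ => by rw [Sym2.card_toFinset]; split <;> omega
    _ = 2 * #A := by rw [sum_const, smul_eq_mul, mul_comm]

theorem cost_one_one_cons (e : Sym2 V) (I : List (Sym2 V)) (M : Schedule V) :
    cost (fun _ => 1) 1 (e :: I) M
      = 1 + #(M 0 ∆ M 1) + cost (fun _ => 1) 1 I (fun i => M (i + 1)) := by
  simp [cost]

theorem subInput_cons (e : Sym2 V) (I : List (Sym2 V)) (v : V) :
    subInput (e :: I) v = if v ∈ e then e :: subInput I v else subInput I v := by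
  simp [subInput, List.filter_cons]

theorem idxs_cons (e : Sym2 V) (I : List (Sym2 V)) (v : V) :
    idxs (e :: I) v = if v ∈ e then 0 :: (idxs I v).map (· + 1) else (idxs I v).map (· + 1) := by
  unfold idxs
  rw [List.length_cons, List.range_succ_eq_map, List.filter_cons, List.filter_map]
  by_cases hv : v ∈ e <;> simp [hv, Function.comp_def]

/-- `inducedCache` started from the trace of `M 0` at `v` rather than from `∅`: unlike
`inducedCache`, this family is stable under dropping the first request of `I`. -/
def nodeCache (I : List (Sym2 V)) (M : Schedule V) (v : V) : ℕ → Finset (Sym2 V)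
  | 0 => (M 0).filter (v ∈ ·)
  | t + 1 => (M ((idxs I v).getD t I.length + 1)).filter (v ∈ ·)

theorem inducedCache_eq_nodeCache {I : List (Sym2 V)} {M : Schedule V} (hM : M 0 = ∅) (v : V) :
    inducedCache I M v = nodeCache I M v := by
  funext t
  cases t with
  | zero => simp [inducedCache, nodeCache, hM]
  | succ t => rfl

theorem nodeCache_cons_succ_of_mem {e : Sym2 V} (I : List (Sym2 V)) (M : Schedule V) {v : V}
    (hv : v ∈ e) :
    (fun t => nodeCache (e :: I) M v (t + 1)) = nodeCache I (fun i => M (i + 1)) v := by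
  funext t
  cases t <;> simp [nodeCache, idxs_cons, hv]

theorem nodeCache_cons_succ_of_not_mem {e : Sym2 V} (I : List (Sym2 V)) (M : Schedule V) {v : V}
    (hv : v ∉ e) (t : ℕ) :
    nodeCache (e :: I) M v (t + 1) = nodeCache I (fun i => M (i + 1)) v (t + 1) := by
  simp [nodeCache, idxs_cons, hv]

theorem served_nodeCache {I : List (Sym2 V)} {M : Schedule V} (hM : Served I M) (v : V) :
    Served (subInput I v) (nodeCache I M v) := by
  induction I generalizing M with
  | nil => trivial
  | cons e I ih =>
    by_cases hv : v ∈ e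
    · rw [subInput_cons, if_pos hv]
      refine ⟨?_, ?_⟩
      · rw [congrFun (nodeCache_cons_succ_of_mem I M hv) 0]
        exact mem_filter.2 ⟨hM.1, hv⟩
      · rw [nodeCache_cons_succ_of_mem I M hv]
        exact ih hM.2
    · rw [subInput_cons, if_neg hv]
      exact served_of_succ_eq (nodeCache_cons_succ_of_not_mem I M hv) (ih hM.2)

theorem fetchCost_nodeCache_cons_le (e : Sym2 V) (I : List (Sym2 V)) (M : Schedule V) (v : V) :
    fetchCost (subInput (e :: I) v) (nodeCache (e :: I) M v)
      ≤ fetchCost (subInput I v) (nodeCache I (fun i => M (i + 1)) v)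
        + #((M 1 \ M 0).filter (v ∈ ·)) := by
  have hfilter : (M 1).filter (v ∈ ·) \ (M 0).filter (v ∈ ·) = (M 1 \ M 0).filter (v ∈ ·) := by
    ext; simp only [mem_sdiff, mem_filter]; tauto
  by_cases hv : v ∈ e
  · rw [subInput_cons, if_pos hv, fetchCost, nodeCache_cons_succ_of_mem I M hv,
      congrFun (nodeCache_cons_succ_of_mem I M hv) 0, add_comm]
    simp only [nodeCache, hfilter, le_refl]
  · rw [subInput_cons, if_neg hv]
    simpa only [nodeCache, hfilter] using
      fetchCost_le_of_succ_eq (subInput I v) (nodeCache_cons_succ_of_not_mem I M hv)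

theorem sum_fetchCost_nodeCache_le [Fintype V] (I : List (Sym2 V)) (M : Schedule V) :
    ∑ v : V, fetchCost (subInput I v) (nodeCache I M v) ≤ 2 * cost (fun _ => 1) 1 I M := by
  induction I generalizing M with
  | nil => simp [fetchCost, cost, subInput]
  | cons e I ih =>
    set M' : Schedule V := fun i => M (i + 1)
    have hadded : ∑ v : V, #((M 1 \ M 0).filter (v ∈ ·)) ≤ 2 * #(M 0 ∆ M 1) :=
      (sum_card_filter_mem_le _).trans <| Nat.mul_le_mul_left 2 <|
        card_le_card <| symmDiff_def (M 0) (M 1) ▸ le_sup_right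
    calc ∑ v : V, fetchCost (subInput (e :: I) v) (nodeCache (e :: I) M v)
        ≤ ∑ v : V, (fetchCost (subInput I v) (nodeCache I M' v)
            + #((M 1 \ M 0).filter (v ∈ ·))) :=
          sum_le_sum fun v _ => fetchCost_nodeCache_cons_le e I M v
      _ = ∑ v : V, fetchCost (subInput I v) (nodeCache I M' v)
            + ((∑ v : V, #((M 1 \ M 0).filter (v ∈ ·)) : ℕ) : ℝ≥0∞) := by
          rw [sum_add_distrib, Nat.cast_sum]
      _ ≤ 2 * cost (fun _ => 1) 1 I M' + 2 * #(M 0 ∆ M 1) :=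
          add_le_add (ih M') (by exact_mod_cast hadded)
      _ ≤ 2 * cost (fun _ => 1) 1 (e :: I) M := by
          rw [cost_one_one_cons, mul_add, mul_add, add_comm]
          exact add_le_add_left le_add_self _

theorem cacheLE_inducedCache {a : ℕ} {M : Schedule V} (hM : Feasible a M) (I : List (Sym2 V))
    (v : V) : CacheLE a (inducedCache I M v) := by
  refine ⟨rfl, fun t => ?_⟩
  cases t with
  | zero => simp [inducedCache]
  | succ t => exact (hM.2 _).2 v

theorem statement7_general (V : Type) [Fintype V] [DecidableEq V]
    (a : ℕ) (I : List (Sym2 V))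
    (M : Schedule V) (hM : Feasible a M) (hforce : Served I M) :
    (∀ v : V, CacheLE a (inducedCache I M v) ∧
        Served (subInput I v) (inducedCache I M v)) ∧
    ∑ v : V, fetchCost (subInput I v) (inducedCache I M v)
      ≤ 2 * cost (fun _ : Sym2 V => 1) 1 I M := by
  refine ⟨fun v => ⟨cacheLE_inducedCache hM I v, ?_⟩, ?_⟩ <;>
    simp_rw [inducedCache_eq_nodeCache hM.1]
  · exact served_nodeCache hforce v
  · exact sum_fetchCost_nodeCache_le I M

/-- Let `M` be a feasible offline solution for a uniform
`a`-matching input `I` with the forcing property.  For every node `v`, the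
induced cache schedule on the subsequence `I_v` (repeating the actions of `M`
pertaining to pairs with endpoint `v`) is a feasible `a`-paging schedule with
forced fetching on `I_v`, and the total fetch cost satisfies
`∑_{v∈V} OFF_v(I_v) ≤ 2·OFF(I)`. -/
theorem statement7 (V : Type) [Fintype V] [DecidableEq V]
    (a : ℕ) (I : List (Sym2 V)) (hI : ∀ e ∈ I, ¬ e.IsDiag)
    (M : Schedule V) (hM : Feasible a M) (hforce : Served I M) :
    (∀ v : V, CacheLE a (inducedCache I M v) ∧
        Served (subInput I v) (inducedCache I M v)) ∧
    ∑ v : V, fetchCost (subInput I v) (inducedCache I M v)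
      ≤ 2 * cost (fun _ : Sym2 V => 1) 1 I M :=
  statement7_general V a I M hM hforce
end BM
end
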